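/- Fix H ∈ (0,1) and let q(x,t) = 2 ∫₀^∞ ( e^(−x²/(2s²)) / √(2πs²) ) · ( e^(−s²/(2t^(2H))) / √(2π t^(2H)) ) ds for x ∈ ℝ and t > 0, the density of the iterated fractional Brownian motion B¹_{H₁}(|B²_H(t)|^(1/H₁)). Then q satisfies the partial differential equation ∂q/∂t = −H t^(2H−1) ( 2 ∂²q/∂x² + x ∂³q/∂x³ ) for all x ∈ ℝ \ {0} and t > 0. -/

import Mathlib

/-!
Put `a = t^(2H)`, `k(s) = exp(-x²/(2s²) - s²/(2a))` and `Mₙ = ∫₀^∞ sⁿ k(s) ds`, so that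
`q = (π√a)⁻¹ M₋₁`. Differentiating under the integral sign gives `∂ₓ Mₙ = -x Mₙ₋₂` and
`∂ₐ Mₙ = Mₙ₊₂ / (2a²)`, so both sides of the equation are linear combinations of
`M₁, M₋₁, M₋₃, M₋₅, M₋₇`. Integrating `(sⁿ k)'` over `(0, ∞)` gives the recurrence
`Mₙ₊₁ / a = n Mₙ₋₁ + x² Mₙ₋₃`, and its instances `n = 0, -2, -4` identify the two combinations.
-/

open MeasureTheory

/-- The density of the iterated fractional Brownian motion
`B¹_{H₁}(|B²_H(t)|^(1/H₁))`:
`q(x,t) = 2 ∫₀^∞ (e^(−x²/(2s²))/√(2πs²)) (e^(−s²/(2t^(2H)))/√(2πt^(2H))) ds`. -/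
noncomputable def qIF (H x t : ℝ) : ℝ :=
  2 * ∫ s in Set.Ioi (0:ℝ),
    (Real.exp (-x ^ 2 / (2 * s ^ 2)) / Real.sqrt (2 * Real.pi * s ^ 2)) *
      (Real.exp (-s ^ 2 / (2 * t ^ (2 * H))) / Real.sqrt (2 * Real.pi * t ^ (2 * H)))

namespace IteratedFBM

open Real Set Filter Topology
open scoped Nat

noncomputable def kernel (x a s : ℝ) : ℝ := exp (-x ^ 2 / (2 * s ^ 2) - s ^ 2 / (2 * a))

noncomputable def moment (x a : ℝ) (n : ℤ) : ℝ := ∫ s in Ioi 0, s ^ n * kernel x a s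

lemma kernel_pos (x a s : ℝ) : 0 < kernel x a s := exp_pos _

lemma zpow_mul_kernel_nonneg (x a : ℝ) (n : ℤ) {s : ℝ} (hs : 0 < s) :
    0 ≤ s ^ n * kernel x a s :=
  mul_nonneg (zpow_pos hs n).le (kernel_pos x a s).le

lemma kernel_le_kernel_of_sq_le {y ξ : ℝ} (h : y ^ 2 ≤ ξ ^ 2) (a s : ℝ) :
    kernel ξ a s ≤ kernel y a s := by
  unfold kernel; gcongr

lemma kernel_le_kernel_of_le (x : ℝ) {A B : ℝ} (hA : 0 < A) (hAB : A ≤ B) (s : ℝ) :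
    kernel x A s ≤ kernel x B s := by
  unfold kernel; gcongr

lemma pow_mul_exp_neg_le_factorial (k : ℕ) {y : ℝ} (hy : 0 ≤ y) : y ^ k * exp (-y) ≤ k ! := by
  have := Real.pow_div_factorial_le_exp (x := y) hy k
  rw [div_le_iff₀ (by positivity)] at this
  rw [exp_neg, ← div_eq_mul_inv, div_le_iff₀ (exp_pos y)]
  linarith

lemma kernel_eq_kernel_mul_exp (x a s : ℝ) :
    kernel x a s = kernel x (2 * a) s * exp (-(4 * a)⁻¹ * s ^ 2) := by
  rw [kernel, kernel, ← exp_add]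
  congr 1
  ring

lemma exists_zpow_mul_kernel_le {x : ℝ} (hx : x ≠ 0) {a : ℝ} (ha : 0 < a) (n : ℤ) :
    ∃ C, ∀ s, 0 < s → s ^ n * kernel x a s ≤ C := by
  set k := n.natAbs
  refine ⟨(2 / x ^ 2) ^ k * k ! + (2 * a) ^ k * k !, fun s hs => ?_⟩
  have hC₁ : 0 ≤ (2 / x ^ 2) ^ k * k ! := by positivity
  have hC₂ : 0 ≤ (2 * a) ^ k * k ! := by positivity
  rcases le_total s 1 with hs1 | hs1
  · have hpow : s ^ n ≤ (2 / x ^ 2) ^ k * (x ^ 2 / (2 * s ^ 2)) ^ k := calc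
      s ^ n ≤ s ^ (-(2 * k : ℤ)) := zpow_le_zpow_right_of_le_one₀ hs hs1 (by omega)
      _ = ((s ^ 2)⁻¹) ^ k := by rw [zpow_neg, inv_pow, ← pow_mul]; norm_cast
      _ = (2 / x ^ 2) ^ k * (x ^ 2 / (2 * s ^ 2)) ^ k := by rw [← mul_pow]; field_simp
    have hexp : kernel x a s ≤ exp (-(x ^ 2 / (2 * s ^ 2))) := by
      rw [kernel, neg_div]
      gcongr
      linarith [div_nonneg (sq_nonneg s) (by positivity : (0:ℝ) ≤ 2 * a)]
    calc s ^ n * kernel x a s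
        ≤ (2 / x ^ 2) ^ k * (x ^ 2 / (2 * s ^ 2)) ^ k * exp (-(x ^ 2 / (2 * s ^ 2))) :=
          mul_le_mul hpow hexp (kernel_pos x a s).le (by positivity)
      _ ≤ (2 / x ^ 2) ^ k * k ! := by
        rw [mul_assoc]; gcongr; exact pow_mul_exp_neg_le_factorial k (by positivity)
      _ ≤ _ := le_add_of_nonneg_right hC₂
  · have hpow : s ^ n ≤ (2 * a) ^ k * (s ^ 2 / (2 * a)) ^ k := calc
      s ^ n ≤ s ^ (2 * k : ℤ) := zpow_le_zpow_right₀ hs1 (by omega)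
      _ = (2 * a) ^ k * (s ^ 2 / (2 * a)) ^ k := by
        rw [← mul_pow]; norm_cast; field_simp; ring
    have hexp : kernel x a s ≤ exp (-(s ^ 2 / (2 * a))) := by
      rw [kernel, neg_div]
      gcongr
      linarith [div_nonneg (sq_nonneg x) (by positivity : (0:ℝ) ≤ 2 * s ^ 2)]
    calc s ^ n * kernel x a s
        ≤ (2 * a) ^ k * (s ^ 2 / (2 * a)) ^ k * exp (-(s ^ 2 / (2 * a))) :=
          mul_le_mul hpow hexp (kernel_pos x a s).le (by positivity)
      _ ≤ (2 * a) ^ k * k ! := by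
        rw [mul_assoc]; gcongr; exact pow_mul_exp_neg_le_factorial k (by positivity)
      _ ≤ _ := le_add_of_nonneg_left hC₁

lemma exists_zpow_mul_kernel_le_exp {x : ℝ} (hx : x ≠ 0) {a : ℝ} (ha : 0 < a) (n : ℤ) :
    ∃ C, ∀ s, 0 < s → s ^ n * kernel x a s ≤ C * exp (-(4 * a)⁻¹ * s ^ 2) := by
  obtain ⟨C, hC⟩ := exists_zpow_mul_kernel_le hx (by positivity : 0 < 2 * a) n
  refine ⟨C, fun s hs => ?_⟩
  rw [kernel_eq_kernel_mul_exp, ← mul_assoc]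
  exact mul_le_mul_of_nonneg_right (hC s hs) (exp_pos _).le

lemma continuousOn_zpow_mul_kernel (x a : ℝ) (n : ℤ) :
    ContinuousOn (fun s => s ^ n * kernel x a s) (Ioi 0) := by
  intro s hs
  have hs : s ≠ 0 := (mem_Ioi.1 hs).ne'
  unfold kernel
  exact ContinuousAt.continuousWithinAt
    (by fun_prop (disch := first | exact Or.inl hs | positivity))

lemma integrableOn_zpow_mul_kernel {x : ℝ} (hx : x ≠ 0) {a : ℝ} (ha : 0 < a) (n : ℤ) :
    IntegrableOn (fun s => s ^ n * kernel x a s) (Ioi 0) := by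
  obtain ⟨C, hC⟩ := exists_zpow_mul_kernel_le_exp hx ha n
  have hgauss := (integrable_exp_neg_mul_sq (b := (4 * a)⁻¹) (by positivity)).const_mul C
  refine Integrable.mono' hgauss.integrableOn
    ((continuousOn_zpow_mul_kernel x a n).aestronglyMeasurable measurableSet_Ioi) ?_
  refine (ae_restrict_iff' measurableSet_Ioi).2 (Eventually.of_forall fun s hs => ?_)
  rw [norm_of_nonneg (zpow_mul_kernel_nonneg x a n hs)]
  exact hC s hs

lemma tendsto_zpow_mul_kernel_nhdsGT_zero {x : ℝ} (hx : x ≠ 0) {a : ℝ} (ha : 0 < a) (n : ℤ) :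
    Tendsto (fun s => s ^ n * kernel x a s) (𝓝[>] 0) (𝓝 0) := by
  obtain ⟨C, hC⟩ := exists_zpow_mul_kernel_le hx ha (n - 1)
  have hlim : Tendsto (fun s : ℝ => s * C) (𝓝[>] 0) (𝓝 0) := by
    simpa using ((continuous_mul_const C).tendsto 0).mono_left nhdsWithin_le_nhds
  refine squeeze_zero'
    (eventually_nhdsWithin_of_forall fun s hs => zpow_mul_kernel_nonneg x a n hs)
    (eventually_nhdsWithin_of_forall fun s (hs : 0 < s) => ?_) hlim
  calc s ^ n * kernel x a s = s * (s ^ (n - 1) * kernel x a s) := by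
        rw [zpow_sub_one₀ hs.ne']; field_simp
    _ ≤ s * C := mul_le_mul_of_nonneg_left (hC s hs) hs.le

lemma tendsto_zpow_mul_kernel_atTop {x : ℝ} (hx : x ≠ 0) {a : ℝ} (ha : 0 < a) (n : ℤ) :
    Tendsto (fun s => s ^ n * kernel x a s) atTop (𝓝 0) := by
  obtain ⟨C, hC⟩ := exists_zpow_mul_kernel_le hx ha (n + 1)
  have hlim : Tendsto (fun s : ℝ => s⁻¹ * C) atTop (𝓝 0) := by
    simpa using tendsto_inv_atTop_zero.mul_const C
  refine squeeze_zero' ((eventually_gt_atTop 0).mono fun s hs => zpow_mul_kernel_nonneg x a n hs)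
    ((eventually_gt_atTop 0).mono fun s hs => ?_) hlim
  calc s ^ n * kernel x a s = s⁻¹ * (s ^ (n + 1) * kernel x a s) := by
        rw [zpow_add_one₀ hs.ne']; field_simp
    _ ≤ s⁻¹ * C := mul_le_mul_of_nonneg_left (hC s hs) (inv_nonneg.2 hs.le)

lemma integral_Ioi_of_hasDerivAt_of_tendsto_nhdsGT {f f' : ℝ → ℝ} {a m₀ m : ℝ}
    (hderiv : ∀ s ∈ Ioi a, HasDerivAt f (f' s) s) (hint : IntegrableOn f' (Ioi a))
    (hleft : Tendsto f (𝓝[>] a) (𝓝 m₀)) (hright : Tendsto f atTop (𝓝 m)) :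
    ∫ s in Ioi a, f' s = m - m₀ := by
  have hf : ∀ s ∈ Ioi a, Function.update f a m₀ s = f s := fun s hs =>
    Function.update_of_ne (ne_of_gt hs) _ _
  have := integral_Ioi_of_hasDerivAt_of_tendsto (f := Function.update f a m₀) ?_
    (fun s hs => (hderiv s hs).congr_of_eventuallyEq
      (eventually_of_mem (isOpen_Ioi.mem_nhds hs) hf))
    hint (hright.congr' (eventually_of_mem (Ioi_mem_atTop a) fun s hs => (hf s hs).symm))
  · rwa [Function.update_self] at this
  · rw [← Ioi_insert, continuousWithinAt_insert_self, ContinuousWithinAt, Function.update_self]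
    exact hleft.congr' (eventually_nhdsWithin_of_forall fun s hs => (hf s hs).symm)

lemma hasDerivAt_kernel (x a : ℝ) {s : ℝ} (hs : s ≠ 0) :
    HasDerivAt (kernel x a) (kernel x a s * (x ^ 2 / s ^ 3 - s / a)) s := by
  have h : HasDerivAt (fun σ : ℝ => -x ^ 2 / 2 * (σ ^ 2)⁻¹ - σ ^ 2 / (2 * a))
      (-x ^ 2 / 2 * (-(2 * s) / (s ^ 2) ^ 2) - 2 * s / (2 * a)) s :=
    (((hasDerivAt_pow 2 s).inv (pow_ne_zero 2 hs)).const_mul _).sub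
      ((hasDerivAt_pow 2 s).div_const _) |>.congr_deriv (by simp)
  convert h.exp using 1
  · ext σ; rw [kernel]; congr 1; ring
  · rw [kernel]; field_simp

lemma hasDerivAt_zpow_mul_kernel (x a : ℝ) (n : ℤ) {s : ℝ} (hs : s ≠ 0) :
    HasDerivAt (fun σ => σ ^ n * kernel x a σ)
      (n * (s ^ (n - 1) * kernel x a s) + x ^ 2 * (s ^ (n - 3) * kernel x a s)
        - a⁻¹ * (s ^ (n + 1) * kernel x a s)) s := by
  refine ((hasDerivAt_zpow n s (Or.inl hs)).mul (hasDerivAt_kernel x a hs)).congr_deriv ?_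
  rw [zpow_sub₀ hs, zpow_sub₀ hs, zpow_add₀ hs]
  simp only [zpow_ofNat]
  field_simp
  ring

theorem moment_recurrence {x : ℝ} (hx : x ≠ 0) {a : ℝ} (ha : 0 < a) (n : ℤ) :
    a⁻¹ * moment x a (n + 1) = n * moment x a (n - 1) + x ^ 2 * moment x a (n - 3) := by
  have hi := fun m => integrableOn_zpow_mul_kernel hx ha m
  have h := integral_Ioi_of_hasDerivAt_of_tendsto_nhdsGT
    (fun s hs => hasDerivAt_zpow_mul_kernel x a n (ne_of_gt hs))
    ((((hi _).const_mul _).add ((hi _).const_mul _)).sub ((hi _).const_mul _))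
    (tendsto_zpow_mul_kernel_nhdsGT_zero hx ha n) (tendsto_zpow_mul_kernel_atTop hx ha n)
  rw [integral_sub, integral_add, integral_const_mul, integral_const_mul, integral_const_mul,
    sub_zero] at h
  · simp only [moment]
    linarith
  all_goals first
    | exact (hi _).const_mul _
    | exact ((hi _).const_mul _).add ((hi _).const_mul _)

lemma hasDerivAt_zpow_mul_kernel_x (a : ℝ) (n : ℤ) {s : ℝ} (hs : s ≠ 0) (x : ℝ) :
    HasDerivAt (fun ξ => s ^ n * kernel ξ a s) (-x * (s ^ (n - 2) * kernel x a s)) x := by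
  have h : HasDerivAt (fun ξ : ℝ => -ξ ^ 2 / (2 * s ^ 2) - s ^ 2 / (2 * a))
      (-(2 * x) / (2 * s ^ 2)) x := by
    simpa using ((hasDerivAt_pow 2 x).neg.div_const (2 * s ^ 2)).sub_const (s ^ 2 / (2 * a))
  refine (h.exp.const_mul (s ^ n)).congr_deriv ?_
  rw [kernel, zpow_sub₀ hs, zpow_ofNat]
  field_simp

lemma hasDerivAt_zpow_mul_kernel_a (x : ℝ) (n : ℤ) {s : ℝ} (hs : s ≠ 0) {a : ℝ} (ha : a ≠ 0) :
    HasDerivAt (fun A => s ^ n * kernel x A s)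
      ((2 * a ^ 2)⁻¹ * (s ^ (n + 2) * kernel x a s)) a := by
  have h : HasDerivAt (fun A : ℝ => -x ^ 2 / (2 * s ^ 2) - s ^ 2 / 2 * A⁻¹)
      (-(s ^ 2 / 2 * -(a ^ 2)⁻¹)) a := by
    simpa using ((hasDerivAt_inv ha).const_mul (s ^ 2 / 2)).const_sub (-x ^ 2 / (2 * s ^ 2))
  have hf : (fun A => s ^ n * kernel x A s)
      = fun A => s ^ n * exp (-x ^ 2 / (2 * s ^ 2) - s ^ 2 / 2 * A⁻¹) := by
    funext A; unfold kernel; congr 2; ring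
  rw [hf]
  refine (h.exp.const_mul (s ^ n)).congr_deriv ?_
  unfold kernel; rw [zpow_add₀ hs, zpow_ofNat]; field_simp

theorem hasDerivAt_moment_x {a : ℝ} (ha : 0 < a) (n : ℤ) {x : ℝ} (hx : x ≠ 0) :
    HasDerivAt (fun ξ => moment ξ a n) (-x * moment x a (n - 2)) x := by
  have hint := fun y (hy : y ≠ 0) m => integrableOn_zpow_mul_kernel hy ha m
  have key := hasDerivAt_integral_of_dominated_loc_of_deriv_le (μ := volume.restrict (Ioi 0))
    (F := fun ξ s => s ^ n * kernel ξ a s) (F' := fun ξ s => -ξ * (s ^ (n - 2) * kernel ξ a s))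
    (bound := fun s => 2 * |x| * (s ^ (n - 2) * kernel (x / 2) a s))
    (Metric.ball_mem_nhds x (by positivity : 0 < |x| / 2))
    (Eventually.of_forall fun ξ =>
      (continuousOn_zpow_mul_kernel ξ a n).aestronglyMeasurable measurableSet_Ioi)
    (hint x hx n) ((hint x hx (n - 2)).const_mul (-x)).aestronglyMeasurable ?_
    ((hint (x / 2) (by positivity) (n - 2)).const_mul _) ?_
  · rw [integral_const_mul] at key
    exact key.2
  · refine (ae_restrict_iff' measurableSet_Ioi).2 (Eventually.of_forall fun s hs ξ hξ => ?_)
    rw [Metric.mem_ball, Real.dist_eq] at hξ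
    have hξx : |ξ| ≤ 2 * |x| := by linarith [abs_sub_abs_le_abs_sub ξ x, abs_nonneg x]
    have hxξ : (x / 2) ^ 2 ≤ ξ ^ 2 := by
      rw [sq_le_sq, abs_div, abs_two]
      linarith [abs_sub_abs_le_abs_sub x ξ, abs_sub_comm x ξ]
    rw [norm_mul, norm_neg, Real.norm_eq_abs, norm_of_nonneg (zpow_mul_kernel_nonneg ξ a _ hs)]
    exact mul_le_mul hξx (mul_le_mul_of_nonneg_left (kernel_le_kernel_of_sq_le hxξ a s)
      (zpow_pos hs _).le) (zpow_mul_kernel_nonneg ξ a _ hs) (by positivity)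
  · exact (ae_restrict_iff' measurableSet_Ioi).2 (Eventually.of_forall fun s (hs : 0 < s) ξ _ =>
      hasDerivAt_zpow_mul_kernel_x a n hs.ne' ξ)

theorem hasDerivAt_moment_a {x : ℝ} (hx : x ≠ 0) (n : ℤ) {a : ℝ} (ha : 0 < a) :
    HasDerivAt (fun A => moment x A n) ((2 * a ^ 2)⁻¹ * moment x a (n + 2)) a := by
  have key := hasDerivAt_integral_of_dominated_loc_of_deriv_le (μ := volume.restrict (Ioi 0))
    (F := fun A s => s ^ n * kernel x A s)
    (F' := fun A s => (2 * A ^ 2)⁻¹ * (s ^ (n + 2) * kernel x A s))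
    (bound := fun s => 2 / a ^ 2 * (s ^ (n + 2) * kernel x (2 * a) s))
    (Metric.ball_mem_nhds a (by positivity : 0 < a / 2))
    (Eventually.of_forall fun A =>
      (continuousOn_zpow_mul_kernel x A n).aestronglyMeasurable measurableSet_Ioi)
    (integrableOn_zpow_mul_kernel hx ha n)
    ((integrableOn_zpow_mul_kernel hx ha (n + 2)).const_mul _).aestronglyMeasurable ?_
    ((integrableOn_zpow_mul_kernel hx (by positivity) (n + 2)).const_mul _) ?_
  · rw [integral_const_mul] at key
    exact key.2
  · refine (ae_restrict_iff' measurableSet_Ioi).2 (Eventually.of_forall fun s hs A hA => ?_)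
    rw [Metric.mem_ball, Real.dist_eq, abs_lt] at hA
    have hA₀ : 0 < A := by linarith
    rw [norm_mul, norm_inv, Real.norm_eq_abs, abs_of_pos (by positivity),
      norm_of_nonneg (zpow_mul_kernel_nonneg x A _ hs)]
    have hcoef : (2 * A ^ 2)⁻¹ ≤ 2 / a ^ 2 := by
      rw [inv_le_comm₀ (by positivity) (by positivity), inv_div, div_le_iff₀ (by positivity)]
      nlinarith
    exact mul_le_mul hcoef
      (mul_le_mul_of_nonneg_left (kernel_le_kernel_of_le x hA₀ (by linarith) s)
        (zpow_pos hs _).le) (zpow_mul_kernel_nonneg x A _ hs) (by positivity)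
  · refine (ae_restrict_iff' measurableSet_Ioi).2
      (Eventually.of_forall fun s (hs : 0 < s) A hA => ?_)
    rw [Metric.mem_ball, Real.dist_eq, abs_lt] at hA
    exact hasDerivAt_zpow_mul_kernel_a x n hs.ne' (by linarith)

theorem hasDerivAt_deriv_moment_x {a : ℝ} (ha : 0 < a) (n : ℤ) {x : ℝ} (hx : x ≠ 0) :
    HasDerivAt (deriv fun ξ => moment ξ a n)
      (x ^ 2 * moment x a (n - 4) - moment x a (n - 2)) x := by
  have hev : deriv (fun ξ => moment ξ a n) =ᶠ[𝓝 x] fun ξ => -ξ * moment ξ a (n - 2) :=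
    (eventually_ne_nhds hx).mono fun y hy => (hasDerivAt_moment_x ha n hy).deriv
  refine (((hasDerivAt_id x).neg.mul (hasDerivAt_moment_x ha (n - 2) hx)).congr_of_eventuallyEq
    hev).congr_deriv ?_
  rw [show n - 2 - 2 = n - 4 by ring]
  simp only [id, Pi.neg_apply]
  ring

theorem hasDerivAt_deriv_deriv_moment_x {a : ℝ} (ha : 0 < a) (n : ℤ) {x : ℝ} (hx : x ≠ 0) :
    HasDerivAt (deriv (deriv fun ξ => moment ξ a n))
      (3 * x * moment x a (n - 4) - x ^ 3 * moment x a (n - 6)) x := by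
  have hev : deriv (deriv fun ξ => moment ξ a n) =ᶠ[𝓝 x]
      fun ξ => ξ ^ 2 * moment ξ a (n - 4) - moment ξ a (n - 2) :=
    (eventually_ne_nhds hx).mono fun y hy => (hasDerivAt_deriv_moment_x ha n hy).deriv
  refine ((((hasDerivAt_pow 2 x).mul (hasDerivAt_moment_x ha (n - 4) hx)).sub
    (hasDerivAt_moment_x ha (n - 2) hx)).congr_of_eventuallyEq hev).congr_deriv ?_
  rw [show n - 4 - 2 = n - 6 by ring, show n - 2 - 2 = n - 4 by ring]
  push_cast
  ring

noncomputable def density (x a : ℝ) : ℝ := (π * √a)⁻¹ * moment x a (-1)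

lemma qIF_eq_density (H x t : ℝ) : qIF H x t = density x (t ^ (2 * H)) := by
  rw [qIF, density, moment, ← integral_const_mul, ← integral_const_mul]
  refine setIntegral_congr_fun measurableSet_Ioi fun s (hs : 0 < s) => ?_
  have h2π : (0:ℝ) < 2 * π := by positivity
  rw [sqrt_mul h2π.le, sqrt_mul h2π.le, sqrt_sq hs.le, kernel, sub_eq_add_neg, exp_add, zpow_neg,
    zpow_one, neg_div]
  field_simp
  rw [sq_sqrt h2π.le]

theorem hasDerivAt_density_a {x : ℝ} (hx : x ≠ 0) {a : ℝ} (ha : 0 < a) :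
    HasDerivAt (density x)
      ((π * √a)⁻¹ * ((2 * a ^ 2)⁻¹ * moment x a 1 - (2 * a)⁻¹ * moment x a (-1))) a := by
  have hc := ((hasDerivAt_sqrt ha.ne').const_mul π).inv (by positivity)
  refine (hc.mul (hasDerivAt_moment_a hx (-1) ha)).congr_deriv ?_
  have hsa : √a ^ 2 = a := sq_sqrt ha.le
  have hsa_pos : 0 < √a := sqrt_pos.2 ha
  simp only [Pi.inv_apply]
  field_simp
  rw [hsa, show (-1 : ℤ) + 2 = 1 by norm_num]
  ring

end IteratedFBM

open IteratedFBM in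
theorem stmt_17_general (H : ℝ) :
    ∀ x t : ℝ, x ≠ 0 → 0 < t →
      deriv (fun τ => qIF H x τ) t
        = -(H * t ^ (2 * H - 1)) *
            (2 * deriv (deriv (fun ξ => qIF H ξ t)) x
              + x * deriv (deriv (deriv (fun ξ => qIF H ξ t))) x) := by
  intro x t hx ht
  have ha : 0 < t ^ (2 * H) := Real.rpow_pos_of_pos ht _
  have hqt := (hasDerivAt_density_a hx ha).comp t
    (Real.hasDerivAt_rpow_const (p := 2 * H) (Or.inl ht.ne'))
  have hqt_fun : (fun τ => qIF H x τ) = density x ∘ fun τ => τ ^ (2 * H) :=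
    funext fun τ => qIF_eq_density H x τ
  set a := t ^ (2 * H)
  have h₂ : deriv (deriv fun ξ => moment ξ a (-1)) x
      = x ^ 2 * moment x a (-5) - moment x a (-3) := by
    simpa using (hasDerivAt_deriv_moment_x ha (-1) hx).deriv
  have h₃ : deriv (deriv (deriv fun ξ => moment ξ a (-1))) x
      = 3 * x * moment x a (-5) - x ^ 3 * moment x a (-7) := by
    simpa using (hasDerivAt_deriv_deriv_moment_x ha (-1) hx).deriv
  have r₀ : a⁻¹ * moment x a 1 = x ^ 2 * moment x a (-3) := by
    simpa using moment_recurrence hx ha 0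
  have r₂ : a⁻¹ * moment x a (-1) = -2 * moment x a (-3) + x ^ 2 * moment x a (-5) := by
    simpa using moment_recurrence hx ha (-2)
  have r₄ : a⁻¹ * moment x a (-3) = -4 * moment x a (-5) + x ^ 2 * moment x a (-7) := by
    simpa using moment_recurrence hx ha (-4)
  rw [hqt_fun, hqt.deriv]
  simp only [qIF_eq_density, density, deriv_const_mul_field']
  rw [h₂, h₃]
  linear_combination ((Real.pi * √a)⁻¹ * H * t ^ (2 * H - 1)) * (a⁻¹ * r₀ - r₂ + x ^ 2 * r₄)

/-- the density of the iterated fractional Brownian motion satisfies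
`∂q/∂t = −H t^(2H−1) (2 ∂²q/∂x² + x ∂³q/∂x³)` for all `x ≠ 0`, `t > 0`. -/
theorem stmt_17 (H : ℝ) (hH₀ : 0 < H) (hH₁ : H < 1) :
    ∀ x t : ℝ, x ≠ 0 → 0 < t →
      deriv (fun τ => qIF H x τ) t
        = -(H * t ^ (2 * H - 1)) *
            (2 * deriv (deriv (fun ξ => qIF H ξ t)) x
              + x * deriv (deriv (deriv (fun ξ => qIF H ξ t))) x) :=
  stmt_17_general H
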